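/- The integral against a valuation is linear in the valuation: for subprobability valuations ν₁,…,νₙ on a space X, coefficients rᵢ ≥ 0 with Σ rᵢ ≤ 1, and a continuous f : X → [0,1], one has ∫ f d(Σ rᵢ νᵢ) = Σ rᵢ ∫ f dνᵢ. -/
import Mathlib


/-- A subprobability valuation on a topological space `X`: a `[0,1]`-valued,
strict, monotone, Scott-continuous (on directed families of opens), modular
function on the open sets of `X`. -/
structure SubVal (X : Type*) [TopologicalSpace X] where
  v : Set X → ℝ
  nonneg : ∀ U : Set X, IsOpen U → 0 ≤ v U
  le_one : ∀ U : Set X, IsOpen U → v U ≤ 1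
  strict : v ∅ = 0
  mono : ∀ ⦃U V : Set X⦄, IsOpen U → IsOpen V → U ⊆ V → v U ≤ v V
  cont : ∀ D : Set (Set X), (∀ U ∈ D, IsOpen U) → D.Nonempty →
    DirectedOn (· ⊆ ·) D → v (⋃₀ D) = sSup (v '' D)
  modular : ∀ U V : Set X, IsOpen U → IsOpen V →
    v U + v V = v (U ∪ V) + v (U ∩ V)


lemma intInt {X : Type*} [TopologicalSpace X] (nui : SubVal X) (f : X → ℝ)
    (hf : ∀ t : ℝ, IsOpen (f ⁻¹' Set.Ioi t)) :
    IntervalIntegrable (fun t => nui.v (f ⁻¹' Set.Ioi t)) MeasureTheory.volume 0 1 := by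
  apply AntitoneOn.intervalIntegrable
  intro s _ t _ hst
  exact nui.mono (hf t) (hf s) (fun x hx => lt_of_le_of_lt hst hx)

/-- The Choquet integral of `f` against the set-function `νv`:
`∫₀¹ νv (f⁻¹(t,∞)) dt`. -/
noncomputable def choquet {X : Type*} (νv : Set X → ℝ) (f : X → ℝ) : ℝ :=
  ∫ t in (0:ℝ)..1, νv (f ⁻¹' Set.Ioi t)

/-- The Choquet integral is linear in the valuation: integrating a continuous
`f : X → [0,1]` against a convex combination `Σ rᵢ νᵢ` of subprobability
valuations gives `Σ rᵢ ∫ f dνᵢ`. -/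
theorem choquet_linear_in_valuation {X : Type*} [TopologicalSpace X]
    (n : ℕ) (ν : Fin n → SubVal X) (r : Fin n → ℝ)
    (hr0 : ∀ i, 0 ≤ r i) (hsum : ∑ i, r i ≤ 1)
    (f : X → ℝ) (hf0 : ∀ a, 0 ≤ f a) (hf1 : ∀ a, f a ≤ 1)
    (hf : ∀ t : ℝ, IsOpen (f ⁻¹' Set.Ioi t)) :
    choquet (fun U : Set X => ∑ i, r i * (ν i).v U) f =
      ∑ i, r i * choquet (ν i).v f := by
  unfold choquet
  rw [intervalIntegral.integral_finset_sum]
  · exact Finset.sum_congr rfl fun i _ => by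
      rw [← intervalIntegral.integral_const_mul]
  · exact fun i _ => (intInt (ν i) f hf).const_mul (r i)
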